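/- If T is a singular subset of an association scheme S, then the complex product O^ϑ(S)O_ϑ(S) is contained in T. -/

import Mathlib

open scoped Classical

/-- An association scheme of class `d` on a nonempty finite set `X`:
a partition of `X × X` into nonempty relations `r 0, …, r d` with
`r 0` the diagonal, closed under converse (`star`), and with
intersection numbers `pNum i j k`. -/
structure AssocScheme (X : Type*) [Fintype X] [Nonempty X] (d : ℕ) where
  r : Fin (d + 1) → Set (X × X)
  r_nonempty : ∀ i, (r i).Nonempty
  existsUnique_rel : ∀ q : X × X, ∃! i, q ∈ r i
  r_zero : r 0 = {q : X × X | q.1 = q.2}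
  star : Fin (d + 1) → Fin (d + 1)
  mem_star : ∀ (i : Fin (d + 1)) (q : X × X), q ∈ r (star i) ↔ (q.2, q.1) ∈ r i
  pNum : Fin (d + 1) → Fin (d + 1) → Fin (d + 1) → ℕ
  ncard_eq : ∀ (i j k : Fin (d + 1)), ∀ q ∈ r k,
    {z : X | (q.1, z) ∈ r i ∧ (z, q.2) ∈ r j}.ncard = pNum i j k

namespace AssocScheme

variable {X : Type*} [Fintype X] [Nonempty X] {d : ℕ}

/-- The valency `k_i = p_{i i*}^0` of the relation `R_i`. -/
def val (S : AssocScheme X d) (i : Fin (d + 1)) : ℕ := S.pNum i (S.star i) 0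

/-- The complex product `UV = {R_k : p_{uv}^k > 0 for some R_u ∈ U, R_v ∈ V}`. -/
def cmul (S : AssocScheme X d) (U V : Set (Fin (d + 1))) : Set (Fin (d + 1)) :=
  {k | ∃ u ∈ U, ∃ v ∈ V, 0 < S.pNum u v k}

/-- A nonempty subset `T` is closed if `T*T ⊆ T`. -/
def IsClosedSubset (S : AssocScheme X d) (T : Set (Fin (d + 1))) : Prop :=
  T.Nonempty ∧ S.cmul (S.star '' T) T ⊆ T

/-- The thin radical `O_ϑ(S) = {R_i : k_i = 1}`. -/
def thinRadical (S : AssocScheme X d) : Set (Fin (d + 1)) := {i | S.val i = 1}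

/-- A closed subset `T` is strongly normal if `R_{i*} T R_i ⊆ T` for all `i`. -/
def IsStronglyNormal (S : AssocScheme X d) (T : Set (Fin (d + 1))) : Prop :=
  S.IsClosedSubset T ∧ ∀ i : Fin (d + 1), S.cmul (S.cmul {S.star i} T) {i} ⊆ T

/-- The thin residue `O^ϑ(S)`: the intersection of all strongly normal closed subsets. -/
def thinResidue (S : AssocScheme X d) : Set (Fin (d + 1)) :=
  ⋂₀ {T | S.IsStronglyNormal T}

/-- `⟨H⟩`: the intersection of all closed subsets containing `H`. -/
def closure (S : AssocScheme X d) (H : Set (Fin (d + 1))) : Set (Fin (d + 1)) :=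
  ⋂₀ {T | S.IsClosedSubset T ∧ H ⊆ T}

/-- The adjacency matrix `A̅_i` of `R_i`, with entries in `𝔽`. -/
noncomputable def adj (S : AssocScheme X d) (𝔽 : Type*) [Field 𝔽] (i : Fin (d + 1)) :
    Matrix X X 𝔽 :=
  Matrix.of fun x y => if (x, y) ∈ S.r i then 1 else 0

/-- `v` spans a trivial `𝔽S`-submodule of the regular `𝔽S`-module:
`v` is a nonzero element of `𝔽S` with `A̅_i v = k̅_i v` for all `i`. -/
def IsTrivialVector (S : AssocScheme X d) (𝔽 : Type*) [Field 𝔽] (v : Matrix X X 𝔽) : Prop :=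
  v ≠ 0 ∧ v ∈ Submodule.span 𝔽 (Set.range (S.adj 𝔽)) ∧
    ∀ i : Fin (d + 1), S.adj 𝔽 i * v = (S.val i : 𝔽) • v

/-- `S` is `p`-transitive over `𝔽` (of characteristic `p`) if the regular `𝔽S`-module
contains a unique trivial `𝔽S`-submodule. -/
def IsPTransitive (S : AssocScheme X d) (𝔽 : Type*) [Field 𝔽] : Prop :=
  ∃! W : Submodule 𝔽 (Matrix X X 𝔽),
    ∃ v : Matrix X X 𝔽, S.IsTrivialVector 𝔽 v ∧ W = Submodule.span 𝔽 {v}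

/-- A subset `T ⊆ S` is singular if `O_ϑ(S) ⊆ T` and
`R_x R_{y*} R_y R_z ⊆ T` for all `R_x ∈ O_ϑ(S)`, `R_y ∈ S`, `R_z ∈ T`. -/
def IsSingular (S : AssocScheme X d) (T : Set (Fin (d + 1))) : Prop :=
  S.thinRadical ⊆ T ∧ ∀ x ∈ S.thinRadical, ∀ y : Fin (d + 1), ∀ z ∈ T,
    S.cmul (S.cmul (S.cmul {x} {S.star y}) {y}) {z} ⊆ T

/-- `S_{p'} = {R_i ∈ S : p ∤ k_i}`. -/
def pPrimePart (S : AssocScheme X d) (p : ℕ) : Set (Fin (d + 1)) :=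
  {i | ¬ p ∣ S.val i}

end AssocScheme

/-!
Let `T₀` be the closed subset generated by all products `c* c`. It is strongly normal, since for
each `s` the relations `u` with `s* u s ⊆ T₀` form a closed subset containing every `c* c`; hence
`O^ϑ(S) ⊆ T₀`. Taking `R_x = R_0` in the definition of a singular subset shows that every `c* c`
lies in the closed subset of relations `u` that preserve `T` under left multiplication, so `T₀`
does as well, and `O^ϑ(S) O_ϑ(S) ⊆ T₀ T ⊆ T` because `O_ϑ(S) ⊆ T`.
-/

namespace AssocScheme

variable {X : Type*} [Fintype X] [Nonempty X] {d : ℕ} (S : AssocScheme X d)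

noncomputable def cls (x y : X) : Fin (d + 1) :=
  (S.existsUnique_rel (x, y)).exists.choose

lemma cls_eq_iff {x y : X} {i : Fin (d + 1)} : S.cls x y = i ↔ (x, y) ∈ S.r i :=
  ⟨fun h => h ▸ (S.existsUnique_rel (x, y)).exists.choose_spec,
    (S.existsUnique_rel (x, y)).unique (S.existsUnique_rel (x, y)).exists.choose_spec⟩

lemma exists_cls_eq (k : Fin (d + 1)) : ∃ x y, S.cls x y = k := by
  obtain ⟨⟨x, y⟩, h⟩ := S.r_nonempty k
  exact ⟨x, y, S.cls_eq_iff.2 h⟩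

lemma cls_swap (x y : X) : S.cls y x = S.star (S.cls x y) :=
  S.cls_eq_iff.2 ((S.mem_star _ _).2 (S.cls_eq_iff.1 rfl))

lemma star_star (i : Fin (d + 1)) : S.star (S.star i) = i := by
  obtain ⟨x, y, rfl⟩ := S.exists_cls_eq i
  rw [← cls_swap, ← cls_swap]

lemma cls_eq_zero_iff {x y : X} : S.cls x y = 0 ↔ x = y := by
  rw [cls_eq_iff, r_zero, Set.mem_ofPred_eq]

lemma cls_self (x : X) : S.cls x x = 0 :=
  S.cls_eq_zero_iff.2 rfl

lemma pNum_cls (i j : Fin (d + 1)) (x z : X) :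
    S.pNum i j (S.cls x z) = {y | S.cls x y = i ∧ S.cls y z = j}.ncard := by
  simp only [cls_eq_iff]
  exact (S.ncard_eq i j _ (x, z) (S.cls_eq_iff.1 rfl)).symm

lemma cls_mem_cmul_iff {U V : Set (Fin (d + 1))} {x z : X} :
    S.cls x z ∈ S.cmul U V ↔ ∃ y, S.cls x y ∈ U ∧ S.cls y z ∈ V := by
  simp only [cmul, Set.mem_ofPred_eq, pNum_cls, Set.ncard_pos (Set.toFinite _)]
  constructor
  · rintro ⟨u, hu, v, hv, y, rfl, rfl⟩
    exact ⟨y, hu, hv⟩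
  · rintro ⟨y, hu, hv⟩
    exact ⟨_, hu, _, hv, y, rfl, rfl⟩

/-- This is where the constancy of the intersection numbers enters. -/
lemma exists_cls_eq_of_cls_eq {α β x z : X} (h : S.cls α β = S.cls x z) (y : X) :
    ∃ w, S.cls α w = S.cls x y ∧ S.cls w β = S.cls y z := by
  have hy : S.cls α β ∈ S.cmul {S.cls x y} {S.cls y z} :=
    h ▸ S.cls_mem_cmul_iff.2 ⟨y, rfl, rfl⟩
  exact S.cls_mem_cmul_iff.1 hy

lemma exists_cls_eq_left (x : X) (i : Fin (d + 1)) : ∃ y, S.cls x y = i := by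
  obtain ⟨a, b, rfl⟩ := S.exists_cls_eq i
  obtain ⟨y, hy, -⟩ := S.exists_cls_eq_of_cls_eq ((S.cls_self x).trans (S.cls_self a).symm) b
  exact ⟨y, hy⟩

lemma zero_mem_thinRadical : (0 : Fin (d + 1)) ∈ S.thinRadical := by
  obtain ⟨x⟩ := ‹Nonempty X›
  have hx : {y | S.cls x y = 0 ∧ S.cls y x = S.star 0} = {x} := by
    ext y
    rw [Set.mem_ofPred_eq, Set.mem_singleton_iff, cls_eq_zero_iff, eq_comm]
    refine ⟨And.left, fun h => ⟨h, ?_⟩⟩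
    rw [h, cls_swap, cls_self]
  change S.pNum 0 (S.star 0) 0 = 1
  rw [← S.cls_self x, pNum_cls, cls_self, hx, Set.ncard_singleton]

section Closed

variable {S} {C : Set (Fin (d + 1))}

lemma isClosedSubset_iff : S.IsClosedSubset C ↔
    C.Nonempty ∧ ∀ x y z, S.cls y x ∈ C → S.cls y z ∈ C → S.cls x z ∈ C := by
  refine and_congr_right fun _ => ⟨fun h x y z hyx hyz => ?_, fun h k hk => ?_⟩
  · exact h (S.cls_mem_cmul_iff.2 ⟨y, ⟨_, hyx, (S.cls_swap y x).symm⟩, hyz⟩)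
  · obtain ⟨x, z, rfl⟩ := S.exists_cls_eq k
    obtain ⟨y, ⟨t, ht, hty⟩, hyz⟩ := S.cls_mem_cmul_iff.1 hk
    refine h x y z ?_ hyz
    rwa [cls_swap, ← hty, star_star]

lemma IsClosedSubset.cls_mem (hC : S.IsClosedSubset C) {x y z : X}
    (hyx : S.cls y x ∈ C) (hyz : S.cls y z ∈ C) : S.cls x z ∈ C :=
  (isClosedSubset_iff.1 hC).2 x y z hyx hyz

lemma IsClosedSubset.zero_mem (hC : S.IsClosedSubset C) : (0 : Fin (d + 1)) ∈ C := by
  obtain ⟨t, ht⟩ := hC.1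
  obtain ⟨x, y, rfl⟩ := S.exists_cls_eq t
  simpa only [cls_self] using hC.cls_mem ht ht

lemma IsClosedSubset.cls_symm (hC : S.IsClosedSubset C) {x y : X}
    (hxy : S.cls x y ∈ C) : S.cls y x ∈ C :=
  hC.cls_mem hxy (by simpa only [cls_self] using hC.zero_mem)

lemma IsClosedSubset.cls_trans (hC : S.IsClosedSubset C) {x y z : X}
    (hxy : S.cls x y ∈ C) (hyz : S.cls y z ∈ C) : S.cls x z ∈ C :=
  hC.cls_mem (hC.cls_symm hxy) hyz

end Closed

lemma isClosedSubset_closure (H : Set (Fin (d + 1))) : S.IsClosedSubset (S.closure H) :=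
  isClosedSubset_iff.2 ⟨⟨0, fun _ hV => hV.1.zero_mem⟩,
    fun _ _ _ hyx hyz V hV => hV.1.cls_mem (hyx V hV) (hyz V hV)⟩

lemma subset_closure (H : Set (Fin (d + 1))) : H ⊆ S.closure H :=
  fun _ hx _ hV => hV.2 hx

lemma closure_subset {H V : Set (Fin (d + 1))} (hV : S.IsClosedSubset V) (hHV : H ⊆ V) :
    S.closure H ⊆ V :=
  Set.sInter_subset_of_mem ⟨hV, hHV⟩

def cmulStarSelf : Set (Fin (d + 1)) := ⋃ c, S.cmul {S.star c} {c}

lemma cls_mem_cmulStarSelf_iff {p q : X} :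
    S.cls p q ∈ S.cmulStarSelf ↔ ∃ x, S.cls x p = S.cls x q := by
  simp only [cmulStarSelf, Set.mem_iUnion, cls_mem_cmul_iff, Set.mem_singleton_iff]
  constructor
  · rintro ⟨c, x, hpx, rfl⟩
    exact ⟨x, by rw [cls_swap, hpx, star_star]⟩
  · rintro ⟨x, h⟩
    exact ⟨S.cls x q, x, by rw [cls_swap, h], rfl⟩

lemma cls_mem_cmulStarSelf_comm {p q : X} :
    S.cls p q ∈ S.cmulStarSelf ↔ S.cls q p ∈ S.cmulStarSelf := by
  simp only [cls_mem_cmulStarSelf_iff, eq_comm]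

section Conj

variable {S} {C : Set (Fin (d + 1))}

/-- `u ∈ S.conjPreimage C s` says that `s* u s ⊆ C`, read off on points. -/
def conjPreimage (S : AssocScheme X d) (C : Set (Fin (d + 1))) (s : Fin (d + 1)) :
    Set (Fin (d + 1)) :=
  {u | ∀ α β p q, S.cls α β = u → S.cls α p = s → S.cls β q = s → S.cls p q ∈ C}

lemma isClosedSubset_conjPreimage (hC : S.IsClosedSubset C) (hgen : S.cmulStarSelf ⊆ C)
    (s : Fin (d + 1)) : S.IsClosedSubset (S.conjPreimage C s) := by
  refine isClosedSubset_iff.2 ⟨⟨0, fun α β p q hαβ hαp hβq => ?_⟩,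
    fun x y z hyx hyz α β p q hαβ hαp hβq => ?_⟩
  · obtain rfl := S.cls_eq_zero_iff.1 hαβ
    exact hgen (S.cls_mem_cmulStarSelf_iff.2 ⟨α, hαp.trans hβq.symm⟩)
  · obtain ⟨w, hαw, hwβ⟩ := S.exists_cls_eq_of_cls_eq hαβ y
    obtain ⟨t, hwt⟩ := S.exists_cls_eq_left w s
    have hwα : S.cls w α = S.cls y x := by rw [cls_swap, hαw, ← cls_swap]
    exact hC.cls_trans (hC.cls_symm (hyx w α t p hwα hwt hαp)) (hyz w β t q hwβ hwt hβq)

lemma cmulStarSelf_subset_conjPreimage (hC : S.IsClosedSubset C) (hgen : S.cmulStarSelf ⊆ C)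
    (s : Fin (d + 1)) : S.cmulStarSelf ⊆ S.conjPreimage C s := by
  rintro _ hu α β p q rfl hαp hβq
  obtain ⟨γ, hγ⟩ := S.cls_mem_cmulStarSelf_iff.1 hu
  -- transport `p` along `(γ, α) ~ (γ, β)` to an `s`-neighbour `w` of `β`; then `p ~ w ~ q`
  -- through the common neighbours `γ` and `β`
  obtain ⟨w, hγw, hwβ⟩ := S.exists_cls_eq_of_cls_eq hγ.symm p
  have hpw : S.cls p w ∈ C := hgen (S.cls_mem_cmulStarSelf_iff.2 ⟨γ, hγw.symm⟩)
  have hwq : S.cls w q ∈ C := by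
    refine hgen (S.cls_mem_cmulStarSelf_iff.2 ⟨β, ?_⟩)
    rw [cls_swap, hwβ, ← cls_swap, hαp, hβq]
  exact hC.cls_trans hpw hwq

end Conj

lemma isStronglyNormal_closure_cmulStarSelf :
    S.IsStronglyNormal (S.closure S.cmulStarSelf) := by
  have hC := S.isClosedSubset_closure S.cmulStarSelf
  refine ⟨hC, fun i k hk => ?_⟩
  obtain ⟨x, z, rfl⟩ := S.exists_cls_eq k
  obtain ⟨w, hxw, hwz⟩ := S.cls_mem_cmul_iff.1 hk
  obtain ⟨y, hxy, hyw⟩ := S.cls_mem_cmul_iff.1 hxw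
  have hconj := S.closure_subset (isClosedSubset_conjPreimage hC (S.subset_closure _) i)
    (cmulStarSelf_subset_conjPreimage hC (S.subset_closure _) i)
  exact hconj hyw y w x z rfl (by rw [cls_swap, Set.mem_singleton_iff.1 hxy, star_star]) hwz

lemma thinResidue_subset_closure_cmulStarSelf :
    S.thinResidue ⊆ S.closure S.cmulStarSelf :=
  Set.sInter_subset_of_mem S.isStronglyNormal_closure_cmulStarSelf

/-- The relations `u` with `u T ⊆ T` and `u* T ⊆ T`, read off on points. -/
def stabilizer (T : Set (Fin (d + 1))) : Set (Fin (d + 1)) :=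
  {u | ∀ x y z, S.cls x y = u → (S.cls y z ∈ T ↔ S.cls x z ∈ T)}

lemma isClosedSubset_stabilizer (T : Set (Fin (d + 1))) : S.IsClosedSubset (S.stabilizer T) := by
  refine isClosedSubset_iff.2 ⟨⟨0, fun x y z hxy => ?_⟩, fun x y z hyx hyz a b c hab => ?_⟩
  · rw [S.cls_eq_zero_iff.1 hxy]
  · obtain ⟨w, haw, hwb⟩ := S.exists_cls_eq_of_cls_eq hab y
    have hwa : S.cls w a = S.cls y x := by rw [cls_swap, haw, ← cls_swap]
    exact (hyz w b c hwb).trans (hyx w a c hwa).symm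

section Singular

variable {S} {T : Set (Fin (d + 1))}

lemma IsSingular.cls_mem_of_cls_mem_cmulStarSelf (hT : S.IsSingular T) {x y z : X}
    (hxy : S.cls x y ∈ S.cmulStarSelf) (hyz : S.cls y z ∈ T) : S.cls x z ∈ T := by
  obtain ⟨γ, hγ⟩ := S.cls_mem_cmulStarSelf_iff.1 hxy
  have hxγ : S.cls x γ = S.star (S.cls γ y) := by rw [← hγ, ← cls_swap]
  exact hT.2 0 S.zero_mem_thinRadical (S.cls γ y) _ hyz <| S.cls_mem_cmul_iff.2
    ⟨y, S.cls_mem_cmul_iff.2 ⟨γ, S.cls_mem_cmul_iff.2 ⟨x, S.cls_self x, hxγ⟩, rfl⟩, rfl⟩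

lemma IsSingular.cmulStarSelf_subset_stabilizer (hT : S.IsSingular T) :
    S.cmulStarSelf ⊆ S.stabilizer T := by
  rintro _ hu x y z rfl
  exact ⟨hT.cls_mem_of_cls_mem_cmulStarSelf hu,
    hT.cls_mem_of_cls_mem_cmulStarSelf (S.cls_mem_cmulStarSelf_comm.1 hu)⟩

end Singular

end AssocScheme

/-- If `T` is a singular subset of `S`, then `O^ϑ(S)O_ϑ(S) ⊆ T`. -/
theorem cmul_thinResidue_thinRadical_subset_of_isSingular
    {X : Type*} [Fintype X] [Nonempty X] {d : ℕ} (S : AssocScheme X d)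
    (T : Set (Fin (d + 1))) (hT : S.IsSingular T) :
    S.cmul S.thinResidue S.thinRadical ⊆ T := by
  intro k hk
  obtain ⟨x, z, rfl⟩ := S.exists_cls_eq k
  obtain ⟨y, hxy, hyz⟩ := S.cls_mem_cmul_iff.1 hk
  have hstab : S.cls x y ∈ S.stabilizer T :=
    S.closure_subset (S.isClosedSubset_stabilizer T) hT.cmulStarSelf_subset_stabilizer
      (S.thinResidue_subset_closure_cmulStarSelf hxy)
  exact (hstab x y z rfl).1 (hT.1 hyz)
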